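/- arXiv:1410.3063 — 3 statements merged into one kernel-verified Lean document; each statement's English description precedes it below -/
import Mathlib

section
/- Let 𝔞 : V × V → ℂ be a bounded coercive sesquilinear form with constants M, δ and embedding constant c_H for V ↪ H. Let A be the part in H of the associated operator 𝒜. Then there exists an angle θ ∈ [0, π/2) depending only on M, δ, c_H such that the spectrum of A is contained in the sector Σ_θ = {r e^{iφ} : r > 0, |φ| < θ}, and for all λ ∉ Σ_θ one has ‖(λ − A)^{-1}‖_{ℒ(H)} ≤ c/(1 + |λ|) for some constant c depending only on M, δ, c_H, θ. -/
/-- The open sector Σ_θ = {r e^{iφ} : r > 0, |φ| < θ}. -/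
def Sector (θ : ℝ) : Set ℂ := {z : ℂ | z ≠ 0 ∧ |Complex.arg z| < θ}

/-!
For `z ∉ Σ_θ` let `B_z = z J*J - 𝒜` on `V`, so that `⟪u, B_z u⟫ = z ‖J u‖² - 𝔞(u, u)`.
The numerical values `𝔞(u, u)` lie in the sector `c |w| ≤ Re w`, `c = δ / (M + δ)`, while
`z ‖J u‖²` lies outside a strictly larger sector; the fixed angle between them gives
`|z ‖J u‖² - 𝔞(u, u)| ≥ η max (|𝔞(u, u)|, |z| ‖J u‖²)` with `η = c² / 4`.
The first bound makes `B_z` coercive in modulus, hence invertible, and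
`(z - A)⁻¹ = J B_z⁻¹ J*`. Testing `B_z u = J* x` against `u`, both bounds together give
`(1 + |z|) ‖J u‖² ≲ |⟪J u, x⟫|`, which is the resolvent estimate.
-/

open ComplexConjugate InnerProductSpace ContinuousLinearMap
open scoped InnerProductSpace InnerProduct

namespace Complex

lemma re_le_mul_abs_im_of_notMem_sector {t : ℝ} (ht : 0 < t) {z : ℂ}
    (hz : z ∉ Sector (Real.arctan t⁻¹)) : z.re ≤ t * |z.im| := by
  by_contra! h
  have hre : 0 < z.re := (mul_nonneg ht.le (abs_nonneg _)).trans_lt h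
  have harg : z.arg = Real.arctan (z.im / z.re) := by
    have := abs_lt.mp (abs_arg_lt_pi_div_two_iff.mpr (Or.inl hre))
    rw [← tan_arg, Real.arctan_tan this.1 this.2]
  have hslope : |z.im / z.re| < t⁻¹ := by
    rw [abs_div, abs_of_pos hre, div_lt_iff₀ hre, inv_mul_eq_div, lt_div_iff₀ ht]
    linarith
  refine hz ⟨fun h0 => by simp [h0] at hre, ?_⟩
  rw [harg, abs_lt, ← Real.arctan_neg]
  exact ⟨Real.arctan_strictMono (neg_lt.mp ((neg_le_abs _).trans_lt hslope)),
    Real.arctan_strictMono ((le_abs_self _).trans_lt hslope)⟩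

lemma abs_im_le_of_mul_norm_le_re {c : ℝ} {w : ℂ} (hc0 : 0 ≤ c) (hc1 : c ≤ 1)
    (hw : c * ‖w‖ ≤ w.re) : |w.im| ≤ (1 - c ^ 2 / 2) * ‖w‖ := by
  have hc : 0 ≤ 1 - c ^ 2 / 2 := by nlinarith
  refine abs_le_of_sq_le_sq' ?_ (by positivity) |>.2
  have hre : (c * ‖w‖) ^ 2 ≤ w.re ^ 2 := pow_le_pow_left₀ (by positivity) hw 2
  calc |w.im| ^ 2 = ‖w‖ ^ 2 - w.re ^ 2 := by rw [sq_abs, sq_norm_sub_sq_re]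
    _ ≤ ((1 - c ^ 2 / 2) * ‖w‖) ^ 2 := by nlinarith [sq_nonneg (c ^ 2 * ‖w‖)]

lemma re_mul_conj_le_of_sector {c : ℝ} {w z : ℂ} (hc0 : 0 ≤ c) (hc1 : c ≤ 1)
    (hw : c * ‖w‖ ≤ w.re) (hz : z.re ≤ c ^ 2 / 4 * |z.im|) :
    (w * conj z).re ≤ (1 - c ^ 2 / 4) * (‖w‖ * ‖z‖) := by
  have hw0 : 0 ≤ w.re := (mul_nonneg hc0 (norm_nonneg w)).trans hw
  have hre : w.re * z.re ≤ c ^ 2 / 4 * (‖w‖ * ‖z‖) :=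
    calc w.re * z.re ≤ w.re * (c ^ 2 / 4 * |z.im|) := mul_le_mul_of_nonneg_left hz hw0
      _ = c ^ 2 / 4 * (w.re * |z.im|) := by ring
      _ ≤ c ^ 2 / 4 * (‖w‖ * ‖z‖) := by
        gcongr
        exacts [re_le_norm w, abs_im_le_norm z]
  have him : w.im * z.im ≤ (1 - c ^ 2 / 2) * (‖w‖ * ‖z‖) :=
    calc w.im * z.im ≤ |w.im| * |z.im| := by rw [← abs_mul]; exact le_abs_self _
      _ ≤ (1 - c ^ 2 / 2) * ‖w‖ * ‖z‖ :=
        mul_le_mul (abs_im_le_of_mul_norm_le_re hc0 hc1 hw) (abs_im_le_norm z) (abs_nonneg _)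
          (mul_nonneg (by nlinarith) (norm_nonneg w))
      _ = _ := by ring
  simp only [mul_re, conj_re, conj_im]
  linarith

lemma mul_norm_le_norm_sub {η : ℝ} {w z : ℂ} (hη0 : 0 ≤ η) (hη1 : η ≤ 1)
    (h : (w * conj z).re ≤ (1 - η) * (‖w‖ * ‖z‖)) : η * ‖w‖ ≤ ‖w - z‖ := by
  have hsq : ‖w - z‖ ^ 2 = ‖w‖ ^ 2 + ‖z‖ ^ 2 - 2 * (w * conj z).re := by
    simp only [Complex.sq_norm, normSq_sub]
  refine abs_le_of_sq_le_sq' ?_ (norm_nonneg _) |>.2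
  nlinarith [mul_nonneg (sub_nonneg.2 hη1) (sq_nonneg (‖w‖ - ‖z‖)), norm_nonneg w,
    norm_nonneg z, mul_nonneg hη0 (sub_nonneg.2 hη1)]

lemma mul_norm_le_norm_sub_of_sector {c : ℝ} {w z : ℂ} (hc0 : 0 ≤ c) (hc1 : c ≤ 1)
    (hw : c * ‖w‖ ≤ w.re) (hz : z.re ≤ c ^ 2 / 4 * |z.im|) :
    c ^ 2 / 4 * ‖w‖ ≤ ‖z - w‖ ∧ c ^ 2 / 4 * ‖z‖ ≤ ‖z - w‖ := by
  have hη0 : 0 ≤ c ^ 2 / 4 := by positivity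
  have hη1 : c ^ 2 / 4 ≤ 1 := by nlinarith
  have h := re_mul_conj_le_of_sector hc0 hc1 hw hz
  refine ⟨norm_sub_rev w z ▸ mul_norm_le_norm_sub hη0 hη1 h, mul_norm_le_norm_sub hη0 hη1 ?_⟩
  rwa [← conj_re, map_mul, conj_conj, mul_comm, mul_comm ‖z‖]

end Complex

noncomputable def sectorGap (M δ : ℝ) : ℝ := (δ / (M + δ)) ^ 2 / 4

lemma sectorGap_pos {M δ : ℝ} (hM : 0 ≤ M) (hδ : 0 < δ) : 0 < sectorGap M δ := by
  unfold sectorGap; positivity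

lemma sectorial_estimate {M δ K n s : ℝ} {w z : ℂ} (hM : 0 ≤ M) (hδ : 0 < δ) (hK : 0 < K)
    (hre : δ * n ≤ w.re) (hw : ‖w‖ ≤ M * n) (hs : 0 ≤ s) (hsn : s ≤ K * n)
    (hz : z.re ≤ sectorGap M δ * |z.im|) :
    sectorGap M δ * δ * n ≤ ‖z * s - w‖ ∧
      sectorGap M δ * min 1 (δ / K) / 2 * (1 + ‖z‖) * s ≤ ‖z * s - w‖ := by
  set η := sectorGap M δ
  set c := δ / (M + δ)
  have hηc : η = c ^ 2 / 4 := rfl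
  have hη : 0 ≤ η := (sectorGap_pos hM hδ).le
  have hc0 : 0 ≤ c := by positivity
  have hc1 : c ≤ 1 := div_le_one_of_le₀ (by linarith) (by positivity)
  have hcw : c * ‖w‖ ≤ w.re := by
    have hcM : c * M ≤ δ := by
      rw [div_mul_eq_mul_div, div_le_iff₀ (by positivity)]; nlinarith
    have hn : 0 ≤ n := nonneg_of_mul_nonneg_right (hs.trans hsn) hK
    calc c * ‖w‖ ≤ c * (M * n) := mul_le_mul_of_nonneg_left hw hc0
      _ ≤ δ * n := by rw [← mul_assoc]; exact mul_le_mul_of_nonneg_right hcM hn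
      _ ≤ w.re := hre
  have hzs : (z * s).re ≤ c ^ 2 / 4 * |(z * s).im| := by
    rw [Complex.re_mul_ofReal, Complex.im_mul_ofReal, abs_mul, abs_of_nonneg hs, ← mul_assoc]
    exact mul_le_mul_of_nonneg_right hz hs
  obtain ⟨hwgap, hzgap⟩ := Complex.mul_norm_le_norm_sub_of_sector hc0 hc1 hcw hzs
  rw [← hηc] at hwgap hzgap
  have hcoer : η * δ * n ≤ ‖z * s - w‖ :=
    calc η * δ * n ≤ η * ‖w‖ := by
          rw [mul_assoc]
          exact mul_le_mul_of_nonneg_left (hre.trans (Complex.re_le_norm w)) hη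
      _ ≤ ‖z * s - w‖ := hwgap
  refine ⟨hcoer, ?_⟩
  set m := min 1 (δ / K)
  have hms : m * s ≤ δ * n :=
    calc m * s ≤ δ / K * s := mul_le_mul_of_nonneg_right (min_le_right _ _) hs
      _ ≤ δ * n := by rw [div_mul_eq_mul_div, div_le_iff₀ hK]; nlinarith
  have hmzs : m * (‖z‖ * s) ≤ ‖z * s‖ := by
    rw [norm_mul, Complex.norm_real, Real.norm_of_nonneg hs]
    exact mul_le_of_le_one_left (by positivity) (min_le_left _ _)
  calc η * m / 2 * (1 + ‖z‖) * s = (η * (m * s) + η * (m * (‖z‖ * s))) / 2 := by ring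
    _ ≤ (η * (δ * n) + η * ‖z * s‖) / 2 := by gcongr
    _ ≤ ‖z * s - w‖ := by linarith

section FormOperator

variable {V H : Type*} [NormedAddCommGroup V] [InnerProductSpace ℂ V] [CompleteSpace V]
  [NormedAddCommGroup H] [InnerProductSpace ℂ H] [CompleteSpace H]

noncomputable def operatorOfForm (a : V →L[ℂ] V →L⋆[ℂ] ℂ) : V →L[ℂ] V :=
  (continuousLinearMapOfBilin a.flip)†

lemma inner_operatorOfForm (a : V →L[ℂ] V →L⋆[ℂ] ℂ) (u v : V) :
    ⟪v, operatorOfForm a u⟫_ℂ = a u v := by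
  rw [operatorOfForm, adjoint_inner_right, continuousLinearMapOfBilin_apply, flip_apply]

theorem exists_resolvent_of_coercive (J : V →L[ℂ] H) (a : V →L[ℂ] V →L⋆[ℂ] ℂ) (z : ℂ)
    {c : ℝ} (hc : 0 < c) (hcoer : ∀ u, c * ‖u‖ ^ 2 ≤ ‖z * (‖J u‖ ^ 2 : ℝ) - a u u‖) :
    ∃ R : H →L[ℂ] H,
      (∀ x : H, ∃ u : V, J u = R x ∧ ∀ v : V, a u v = ⟪J v, z • R x - x⟫_ℂ) ∧
      (∀ (u : V) (w : H), (∀ v : V, a u v = ⟪J v, w⟫_ℂ) → R (z • J u - w) = J u) := by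
  set J' : H →L[ℂ] V := J†
  have hJ' : ∀ v x, ⟪v, J' x⟫_ℂ = ⟪J v, x⟫_ℂ := fun v x => adjoint_inner_right J v x
  set B : V →L[ℂ] V := z • (J' ∘L J) - operatorOfForm a
  have hB : ∀ u v, ⟪v, B u⟫_ℂ = ⟪J v, z • J u⟫_ℂ - a u v := fun u v => by
    simp [B, inner_operatorOfForm, hJ']
  have hBeq : ∀ u w, B u = J' w ↔ ∀ v, a u v = ⟪J v, z • J u - w⟫_ℂ := fun u w => by
    refine ⟨fun h v => ?_, fun h => ext_inner_left ℂ fun v => ?_⟩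
    · have := congrArg (⟪v, ·⟫_ℂ) h
      simp only [hB, hJ'] at this
      rw [inner_sub_right]
      linear_combination -this
    · rw [hB, hJ', h, inner_sub_right]
      ring
  have hunit : IsUnit B := by
    refine B.isUnit_of_forall_le_norm_inner_map (c := ⟨c, hc.le⟩) hc fun u =>
      (mul_comm _ _).trans_le <| (hcoer u).trans_eq ?_
    rw [← inner_conj_symm, RCLike.norm_conj, hB]
    simp [inner_self_eq_norm_sq_to_K]
  set e := ContinuousLinearEquiv.unitsEquiv ℂ V hunit.unit
  have he : ∀ u, e u = B u := fun u => rfl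
  refine ⟨J ∘L (e.symm : V →L[ℂ] V) ∘L J', fun x => ⟨e.symm (J' x), rfl, ?_⟩, fun u w hw => ?_⟩
  · exact (hBeq _ _).1 (by rw [← he, e.apply_symm_apply])
  · have : e u = J' (z • J u - w) := by
      rw [he, hBeq, sub_sub_cancel]
      exact hw
    simp [← this]

end FormOperator

theorem statement2_general
    (V H : Type*) [NormedAddCommGroup V] [InnerProductSpace ℂ V] [CompleteSpace V]
    [NormedAddCommGroup H] [InnerProductSpace ℂ H] [CompleteSpace H]
    (J : V →L[ℂ] H)
    (M δ cH : ℝ) (hδ : 0 < δ) (hM : 0 < M) (hcH : 0 < cH)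
    (hJbdd : ∀ v : V, ‖J v‖ ≤ cH * ‖v‖) :
    ∃ θ ∈ Set.Ico 0 (Real.pi / 2), ∃ c > 0,
      ∀ a : V →L[ℂ] (V →SL[starRingEnd ℂ] ℂ),
        (∀ u v : V, ‖a u v‖ ≤ M * ‖u‖ * ‖v‖) →
        (∀ u : V, δ * ‖u‖ ^ 2 ≤ (a u u).re) →
        ∀ z : ℂ, z ∉ Sector θ →
          ∃ R : H →L[ℂ] H,
            -- (λ - A) ∘ R = Id : R x ∈ D(A) and A (R x) = z • R x - x
            (∀ x : H, ∃ u : V, J u = R x ∧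
                ∀ v : V, a u v = (inner ℂ (J v) (z • R x - x) : ℂ)) ∧
            -- R ∘ (λ - A) = Id on D(A)
            (∀ (u : V) (w : H), (∀ v : V, a u v = (inner ℂ (J v) w : ℂ)) →
                R (z • J u - w) = J u) ∧
            ‖R‖ ≤ c / (1 + ‖z‖) := by
  set η := sectorGap M δ
  have hη : 0 < η := sectorGap_pos hM.le hδ
  set ε := η * min 1 (δ / cH ^ 2) / 2
  have hε : 0 < ε := by positivity
  refine ⟨Real.arctan η⁻¹, ⟨Real.arctan_nonneg.2 (by positivity), Real.arctan_lt_pi_div_two _⟩,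
    ε⁻¹, by positivity, fun a ha hco z hz => ?_⟩
  have hest (u : V) := sectorial_estimate (K := cH ^ 2) (s := ‖J u‖ ^ 2) hM.le hδ
    (by positivity) (hco u) (by rw [sq, ← mul_assoc]; exact ha u u) (by positivity)
    (by rw [← mul_pow]; exact pow_le_pow_left₀ (norm_nonneg _) (hJbdd u) 2)
    (Complex.re_le_mul_abs_im_of_notMem_sector hη hz)
  obtain ⟨R, hsol, hinv⟩ :=
    exists_resolvent_of_coercive J a z (c := η * δ) (by positivity) fun u => (hest u).1
  refine ⟨R, hsol, hinv, R.opNorm_le_bound (by positivity) fun x => ?_⟩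
  obtain ⟨u, hu, hau⟩ := hsol x
  rw [← hu] at hau ⊢
  have hinner : z * (‖J u‖ ^ 2 : ℝ) - a u u = ⟪J u, x⟫_ℂ := by
    simp [hau, inner_self_eq_norm_sq_to_K]
  have hbound : ε * (1 + ‖z‖) * ‖J u‖ ^ 2 ≤ ‖J u‖ * ‖x‖ :=
    ((hest u).2.trans_eq (by rw [hinner])).trans (norm_inner_le_norm _ _)
  rcases (norm_nonneg (J u)).eq_or_lt with h0 | hpos
  · rw [← h0]; positivity
  · rw [div_mul_eq_mul_div, le_div_iff₀ (by positivity), ← div_eq_inv_mul, le_div_iff₀ hε]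
    nlinarith

theorem statement2
    (V H : Type*) [NormedAddCommGroup V] [InnerProductSpace ℂ V] [CompleteSpace V]
    [NormedAddCommGroup H] [InnerProductSpace ℂ H] [CompleteSpace H]
    (J : V →L[ℂ] H) (hJinj : Function.Injective J) (hJdense : DenseRange J)
    (M δ cH : ℝ) (hδ : 0 < δ) (hM : 0 < M) (hcH : 0 < cH)
    (hJbdd : ∀ v : V, ‖J v‖ ≤ cH * ‖v‖) :
    ∃ θ ∈ Set.Ico 0 (Real.pi / 2), ∃ c > 0,
      ∀ a : V →L[ℂ] (V →SL[starRingEnd ℂ] ℂ),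
        (∀ u v : V, ‖a u v‖ ≤ M * ‖u‖ * ‖v‖) →
        (∀ u : V, δ * ‖u‖ ^ 2 ≤ (a u u).re) →
        ∀ z : ℂ, z ∉ Sector θ →
          ∃ R : H →L[ℂ] H,
            -- (λ - A) ∘ R = Id : R x ∈ D(A) and A (R x) = z • R x - x
            (∀ x : H, ∃ u : V, J u = R x ∧
                ∀ v : V, a u v = (inner ℂ (J v) (z • R x - x) : ℂ)) ∧
            -- R ∘ (λ - A) = Id on D(A)
            (∀ (u : V) (w : H), (∀ v : V, a u v = (inner ℂ (J v) w : ℂ)) →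
                R (z • J u - w) = J u) ∧
            ‖R‖ ≤ c / (1 + ‖z‖) :=
  statement2_general V H J M δ cH hδ hM hcH hJbdd
end

section
/- Let w ∈ L²(0,T;V) ∩ C([0,T];H) with w(0) = 0 satisfy the integral inequality ‖w(t)‖_V ≤ ∫₀ᵗ (c/(t−s)) ω(t−s) ‖w(s)‖_V ds for a.e. t ∈ [0,T], where ω is a modulus of continuity with ∫₀ᵀ ω(s)/s ds < ∞. Then w ≡ 0 on [0,T]. -/
/-!
Write `φ = ‖w‖` and `k(u) = c ω(u) / u` on `(0, T]`. The hypothesis says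
`φ(t) ≤ ∫₀ᵗ k(t - s) φ(s) ds` on `(0, T]`, with `k ∈ L¹` and `φ ∈ L¹` (as `L² ⊂ L¹` on a bounded
interval). Multiplying by `e^{-rt}` keeps this shape: `ψ = e^{-rt} φ` satisfies `ψ ≤ ψ ⋆ k_r` for
the kernel `k_r(u) = e^{-ru} k(u)`, and `‖k_r‖₁ → 0` as `r → ∞` by dominated convergence. Then
`‖ψ‖₁ ≤ ‖ψ ⋆ k_r‖₁ = ‖ψ‖₁ ‖k_r‖₁` with `‖k_r‖₁ < 1` forces `ψ = 0`. Hence `w = 0` a.e., and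
continuity of `ι ∘ w` on `[0, T]` with injectivity of `ι` upgrades this to `w ≡ 0`.
-/

open MeasureTheory Set Filter Topology
open scoped ENNReal

section LConvolution

variable {G : Type*} [MeasurableSpace G] [AddGroup G] [MeasurableAdd₂ G] [MeasurableNeg G]
  {μ : Measure G} [μ.IsAddLeftInvariant] [SFinite μ] {f g : G → ℝ≥0∞}

theorem lintegral_lconvolution (hf : AEMeasurable f μ) (hg : AEMeasurable g μ) :
    ∫⁻ x, (f ⋆ₗ[μ] g) x ∂μ = (∫⁻ x, f x ∂μ) * ∫⁻ x, g x ∂μ := by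
  simp only [lconvolution_def]
  rw [lintegral_lintegral_swap (by fun_prop), ← lintegral_mul_const'' _ hf]
  refine lintegral_congr fun y => ?_
  rw [lintegral_add_left_eq_self (fun x => f y * g x), lintegral_const_mul'' _ hg]

theorem ae_eq_zero_of_le_lconvolution (hf : AEMeasurable f μ) (hg : AEMeasurable g μ)
    (hf_int : ∫⁻ x, f x ∂μ ≠ ∞) (hg_int : ∫⁻ x, g x ∂μ < 1) (hle : f ≤ᵐ[μ] f ⋆ₗ[μ] g) :
    f =ᵐ[μ] 0 := by
  have hbound : ∫⁻ x, f x ∂μ ≤ (∫⁻ x, f x ∂μ) * ∫⁻ x, g x ∂μ :=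
    (lintegral_mono_ae hle).trans_eq (lintegral_lconvolution hf hg)
  refine (lintegral_eq_zero_iff' hf).1 (not_not.1 fun hne => hbound.not_gt ?_)
  simpa [mul_comm] using ENNReal.mul_lt_mul_left hne hf_int hg_int

end LConvolution

theorem ofReal_integral_le_lintegral_ofReal {α : Type*} [MeasurableSpace α]
    {μ : Measure α} (f : α → ℝ) :
    ENNReal.ofReal (∫ x, f x ∂μ) ≤ ∫⁻ x, ENNReal.ofReal (f x) ∂μ := by
  by_cases hf : Integrable f μ
  · rw [integral_eq_lintegral_pos_part_sub_lintegral_neg_part hf]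
    calc ENNReal.ofReal ((∫⁻ x, ENNReal.ofReal (f x) ∂μ).toReal - _)
        ≤ ENNReal.ofReal (∫⁻ x, ENNReal.ofReal (f x) ∂μ).toReal :=
          ENNReal.ofReal_le_ofReal (sub_le_self _ ENNReal.toReal_nonneg)
      _ ≤ ∫⁻ x, ENNReal.ofReal (f x) ∂μ := ENNReal.ofReal_toReal_le
  · simp [integral_undef hf]

noncomputable def expWeight (r t : ℝ) : ℝ≥0∞ := ENNReal.ofReal (Real.exp (-(r * t)))

theorem measurable_expWeight (r : ℝ) : Measurable (expWeight r) := by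
  unfold expWeight; fun_prop

section ExpWeight

variable {r : ℝ}

theorem expWeight_ne_zero (t : ℝ) : expWeight r t ≠ 0 := by
  simp [expWeight, Real.exp_pos]

theorem expWeight_le_one (hr : 0 ≤ r) {t : ℝ} (ht : 0 ≤ t) : expWeight r t ≤ 1 :=
  ENNReal.ofReal_le_one.2 (Real.exp_le_one_iff.2 (neg_nonpos.2 (mul_nonneg hr ht)))

theorem expWeight_eq_mul (s t : ℝ) : expWeight r t = expWeight r s * expWeight r (t - s) := by
  rw [expWeight, expWeight, expWeight, ← ENNReal.ofReal_mul (Real.exp_pos _).le, ← Real.exp_add]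
  ring_nf

theorem tendsto_expWeight_atTop {t : ℝ} (ht : 0 < t) :
    Tendsto (fun r => expWeight r t) atTop (𝓝 0) := by
  have hexp : Tendsto (fun r : ℝ => Real.exp (-(r * t))) atTop (𝓝 0) :=
    Real.tendsto_exp_neg_atTop_nhds_zero.comp (tendsto_id.atTop_mul_const ht)
  rw [← ENNReal.ofReal_zero]
  exact ENNReal.tendsto_ofReal hexp

end ExpWeight

theorem exists_setLIntegral_Ioi_expWeight_mul_lt {k : ℝ → ℝ≥0∞} (hk : AEMeasurable k)
    (hk_int : ∫⁻ u in Ioi 0, k u ≠ ∞) {ε : ℝ≥0∞} (hε : 0 < ε) :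
    ∃ r : ℝ, 0 ≤ r ∧ ∫⁻ u in Ioi 0, expWeight r u * k u < ε := by
  have hlim : Tendsto (fun r => ∫⁻ u in Ioi 0, expWeight r u * k u) atTop (𝓝 0) := by
    have h := tendsto_lintegral_filter_of_dominated_convergence' (μ := volume.restrict (Ioi 0))
      (F := fun r u => expWeight r u * k u) (l := atTop) (f := 0) k
      (Eventually.of_forall fun r => (measurable_expWeight r).aemeasurable.mul hk.restrict)
      ?_ hk_int ?_
    · simpa using h
    · filter_upwards [eventually_ge_atTop 0] with r hr
      filter_upwards [ae_restrict_mem measurableSet_Ioi] with u hu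
      exact mul_le_of_le_one_left zero_le (expWeight_le_one hr (le_of_lt hu))
    · filter_upwards [ae_restrict_mem measurableSet_Ioi, ae_lt_top' hk.restrict hk_int]
        with u hu hku
      simpa using ENNReal.Tendsto.mul_const (tendsto_expWeight_atTop hu) (Or.inr hku.ne)
  exact ((eventually_ge_atTop 0).and (hlim.eventually_lt_const hε)).exists

theorem indicator_expWeight_mul_le_lconvolution {k φ : ℝ → ℝ≥0∞} {r T t : ℝ}
    (htT : t ∈ Ioc 0 T) (ht : φ t ≤ ∫⁻ s in Ioc 0 t, k (t - s) * φ s) :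
    (Ioc 0 T).indicator (fun t => expWeight r t * φ t) t ≤
      ((Ioc 0 T).indicator (fun t => expWeight r t * φ t) ⋆ₗ
        (Ioi 0).indicator fun u => expWeight r u * k u) t := by
  set ψ := (Ioc 0 T).indicator fun t => expWeight r t * φ t with hψ
  set kr := (Ioi 0).indicator fun u => expWeight r u * k u with hkr
  have hψ_kr : ∀ s ∈ Ioo 0 t, expWeight r t * (k (t - s) * φ s) = ψ s * kr (-s + t) := by
    intro s hs
    have hsT : s ∈ Ioc 0 T := ⟨hs.1, hs.2.le.trans htT.2⟩
    have hts : -s + t ∈ Ioi 0 := by simpa [neg_add_eq_sub] using hs.2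
    rw [hψ, hkr, indicator_of_mem hsT, indicator_of_mem hts, expWeight_eq_mul s t,
      neg_add_eq_sub]
    ring
  calc ψ t = expWeight r t * φ t := indicator_of_mem htT _
    _ ≤ expWeight r t * ∫⁻ s in Ioc 0 t, k (t - s) * φ s := mul_le_mul_right ht _
    _ = ∫⁻ s in Ioo 0 t, expWeight r t * (k (t - s) * φ s) := by
      rw [← lintegral_const_mul' (expWeight r t) _ ENNReal.ofReal_ne_top,
        setLIntegral_congr Ioo_ae_eq_Ioc]
    _ = ∫⁻ s in Ioo 0 t, ψ s * kr (-s + t) := setLIntegral_congr_fun measurableSet_Ioo hψ_kr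
    _ ≤ (ψ ⋆ₗ kr) t := setLIntegral_le_lintegral _ _

theorem ae_eq_zero_of_le_lintegral_Ioc_kernel {k φ : ℝ → ℝ≥0∞} {T : ℝ} (hk : AEMeasurable k)
    (hk_int : ∫⁻ u in Ioi 0, k u ≠ ∞) (hφ : AEMeasurable φ (volume.restrict (Ioc 0 T)))
    (hφ_int : ∫⁻ t in Ioc 0 T, φ t ≠ ∞)
    (hle : ∀ᵐ t ∂volume.restrict (Ioc 0 T), φ t ≤ ∫⁻ s in Ioc 0 t, k (t - s) * φ s) :
    φ =ᵐ[volume.restrict (Ioc 0 T)] 0 := by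
  obtain ⟨r, hr, hr_small⟩ := exists_setLIntegral_Ioi_expWeight_mul_lt hk hk_int zero_lt_one
  set ψ := (Ioc 0 T).indicator fun t => expWeight r t * φ t with hψ
  set kr := (Ioi 0).indicator fun u => expWeight r u * k u with hkr
  have hψ_meas : AEMeasurable ψ :=
    (aemeasurable_indicator_iff measurableSet_Ioc).2 ((measurable_expWeight r).aemeasurable.mul hφ)
  have hkr_meas : AEMeasurable kr := (aemeasurable_indicator_iff measurableSet_Ioi).2
    ((measurable_expWeight r).aemeasurable.mul hk.restrict)
  have hψ_int : ∫⁻ t, ψ t ≠ ∞ := by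
    refine ne_top_of_le_ne_top (by rwa [lintegral_indicator measurableSet_Ioc])
      (lintegral_mono (g := (Ioc 0 T).indicator φ) fun t => ?_)
    by_cases ht : t ∈ Ioc 0 T
    · simp only [hψ, indicator_of_mem ht]
      exact mul_le_of_le_one_left zero_le (expWeight_le_one hr ht.1.le)
    · simp [hψ, ht]
  have hkr_int : ∫⁻ u, kr u < 1 := by
    rwa [hkr, lintegral_indicator measurableSet_Ioi]
  have hconv : ψ ≤ᵐ[volume] ψ ⋆ₗ kr := by
    filter_upwards [(ae_restrict_iff' measurableSet_Ioc).1 hle] with t ht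
    by_cases htT : t ∈ Ioc 0 T
    · exact indicator_expWeight_mul_le_lconvolution htT (ht htT)
    · simp [hψ, htT]
  have hψ_zero := ae_eq_zero_of_le_lconvolution hψ_meas hkr_meas hψ_int hkr_int hconv
  refine (ae_restrict_iff' measurableSet_Ioc).2 ?_
  filter_upwards [hψ_zero] with t ht htT
  simpa [hψ, htT, expWeight_ne_zero t] using ht

noncomputable def singularKernel (c T : ℝ) (ω : ℝ → ℝ) : ℝ → ℝ≥0∞ :=
  (Ioc 0 T).indicator fun u => ENNReal.ofReal (c / u * ω u)

section SingularKernel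

variable {c T : ℝ} {ω : ℝ → ℝ}

theorem aemeasurable_singularKernel (hω : IntegrableOn (fun s => ω s / s) (Ioc 0 T)) :
    AEMeasurable (singularKernel c T ω) := by
  refine (aemeasurable_indicator_iff measurableSet_Ioc).2 ?_
  have h := ((hω.const_mul c).aemeasurable).ennreal_ofReal
  refine h.congr (ae_of_all _ fun u => ?_)
  simp only [div_mul_eq_mul_div, mul_div_assoc]

theorem setLIntegral_Ioi_singularKernel_ne_top (hω : IntegrableOn (fun s => ω s / s) (Ioc 0 T)) :
    ∫⁻ u in Ioi 0, singularKernel c T ω u ≠ ∞ := by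
  refine ne_top_of_le_ne_top ?_ (setLIntegral_le_lintegral _ _)
  rw [singularKernel, lintegral_indicator measurableSet_Ioc]
  refine ne_top_of_le_ne_top (hω.const_mul c).hasFiniteIntegral.ne
    (lintegral_mono fun u => ?_)
  rw [show c / u * ω u = c * (ω u / u) by ring]
  exact Real.ofReal_le_enorm _

theorem ofReal_le_singularKernel_mul {u x : ℝ} (hu : u ∈ Icc 0 T) (hx : 0 ≤ x) :
    ENNReal.ofReal (c / u * ω u * x) ≤ singularKernel c T ω u * ENNReal.ofReal x := by
  rcases hu.1.eq_or_lt with rfl | hu0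
  · simp -- `c / 0 = 0`
  · rw [singularKernel, indicator_of_mem (show u ∈ Ioc 0 T from ⟨hu0, hu.2⟩),
      ENNReal.ofReal_mul' hx]

theorem enorm_le_lintegral_singularKernel_mul {V : Type*} [NormedAddCommGroup V] {w : ℝ → V}
    {t : ℝ} (htT : t ∈ Ioc 0 T)
    (ht : ‖w t‖ ≤ ∫ s in (0:ℝ)..t, c / (t - s) * ω (t - s) * ‖w s‖) :
    ‖w t‖ₑ ≤ ∫⁻ s in Ioc 0 t, singularKernel c T ω (t - s) * ‖w s‖ₑ := by
  rw [intervalIntegral.integral_of_le htT.1.le] at ht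
  calc ‖w t‖ₑ ≤ ENNReal.ofReal (∫ s in Ioc 0 t, c / (t - s) * ω (t - s) * ‖w s‖) := by
        rw [← ofReal_norm]; exact ENNReal.ofReal_le_ofReal ht
    _ ≤ ∫⁻ s in Ioc 0 t, ENNReal.ofReal (c / (t - s) * ω (t - s) * ‖w s‖) :=
        ofReal_integral_le_lintegral_ofReal _
    _ ≤ ∫⁻ s in Ioc 0 t, singularKernel c T ω (t - s) * ‖w s‖ₑ := by
        refine setLIntegral_mono' measurableSet_Ioc fun s hs => ?_
        rw [← ofReal_norm]
        exact ofReal_le_singularKernel_mul ⟨by linarith [hs.2], by linarith [hs.1, htT.2]⟩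
          (norm_nonneg _)

end SingularKernel

theorem statement10_general
    (V H : Type*) [NormedAddCommGroup V] [NormedSpace ℝ V]
    [NormedAddCommGroup H] [NormedSpace ℝ H]
    (ι : V →L[ℝ] H) (hιinj : Function.Injective ι)
    (T c : ℝ) (hT : 0 < T)
    (ω : ℝ → ℝ)
    (hωL1 : IntegrableOn (fun s => ω s / s) (Set.Ioc 0 T))
    (w : ℝ → V)
    (hwL2 : MemLp w 2 (volume.restrict (Set.Ioc 0 T)))
    (hwcont : ContinuousOn (fun t => ι (w t)) (Set.Icc 0 T))
    (hineq : ∀ᵐ t ∂(volume.restrict (Set.Ioc 0 T)),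
        ‖w t‖ ≤ ∫ s in (0:ℝ)..t, c / (t - s) * ω (t - s) * ‖w s‖) :
    ∀ t ∈ Set.Icc 0 T, w t = 0 := by
  have hle : ∀ᵐ t ∂volume.restrict (Ioc 0 T),
      ‖w t‖ₑ ≤ ∫⁻ s in Ioc 0 t, singularKernel c T ω (t - s) * ‖w s‖ₑ := by
    filter_upwards [hineq, ae_restrict_mem measurableSet_Ioc] with t ht htT
    exact enorm_le_lintegral_singularKernel_mul htT ht
  have hw_zero : w =ᵐ[volume.restrict (Icc 0 T)] 0 := by
    have hw_int := (hwL2.integrable one_le_two).hasFiniteIntegral.ne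
    have h := ae_eq_zero_of_le_lintegral_Ioc_kernel (aemeasurable_singularKernel hωL1)
      (setLIntegral_Ioi_singularKernel_ne_top hωL1) hwL2.aestronglyMeasurable.enorm hw_int hle
    rw [← Measure.restrict_congr_set Ioc_ae_eq_Icc]
    filter_upwards [h] with t ht
    simpa using ht
  have hιw : EqOn (fun t => ι (w t)) 0 (Icc 0 T) := by
    refine Measure.eqOn_of_ae_eq (μ := volume) ?_ hwcont continuousOn_const ?_
    · filter_upwards [hw_zero] with t ht
      simp [ht]
    · rw [interior_Icc, closure_Ioo hT.ne]
  exact fun t ht => hιinj (by simpa using hιw ht)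

theorem statement10
    (V H : Type*) [NormedAddCommGroup V] [NormedSpace ℝ V] [CompleteSpace V]
    [NormedAddCommGroup H] [NormedSpace ℝ H] [CompleteSpace H]
    (ι : V →L[ℝ] H) (hιinj : Function.Injective ι)
    (T c : ℝ) (hT : 0 < T) (hc : 0 < c)
    (ω : ℝ → ℝ) (hωcont : ContinuousOn ω (Set.Icc 0 T)) (hω0 : ω 0 = 0)
    (hωpos : ∀ s ∈ Set.Icc 0 T, 0 ≤ ω s)
    (hωL1 : IntegrableOn (fun s => ω s / s) (Set.Ioc 0 T))
    (w : ℝ → V)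
    (hwL2 : MemLp w 2 (volume.restrict (Set.Ioc 0 T)))
    (hwcont : ContinuousOn (fun t => ι (w t)) (Set.Icc 0 T))
    (hw0 : w 0 = 0)
    (hineq : ∀ᵐ t ∂(volume.restrict (Set.Ioc 0 T)),
        ‖w t‖ ≤ ∫ s in (0:ℝ)..t, c / (t - s) * ω (t - s) * ‖w s‖) :
    ∀ t ∈ Set.Icc 0 T, w t = 0 :=
  statement10_general V H ι hιinj T c hT ω hωL1 w hwL2 hwcont hineq
end

section
/- For a bounded Lipschitz domain Ω, every α > 1/4, and B : [0,T] → ℒ(L²(∂Ω)) with ‖B(t) − B(s)‖ ≤ c|t−s|^α, the non-autonomous form 𝔞(t;u,v) = ∫_Ω ∇u·∇v̄ + ∫_{∂Ω} B(t)(u|_{∂Ω}) v̄|_{∂Ω} on H¹(Ω) satisfies |𝔞(t;u,v) − 𝔞(s;u,v)| ≤ c' |t−s|^α ‖u‖_{H¹(Ω)} ‖v‖_{H^{s+1/2}(Ω)} for any s ∈ (0,1/2), using the boundedness of the fractional trace operator Tr_s : H^{s+1/2}(Ω) → H^s(∂Ω). -/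
/- Only the boundary term depends on time; it is the pairing of `Tr v` with `(B t - B s) (Tr u)`,
so Cauchy–Schwarz, the Hölder bound on `B`, boundedness of `Tr` on `H¹(Ω)` and the fractional trace
estimate for `v` give the claim with `c' = max (cB * cs * ‖Tr‖) 1`. -/

open scoped InnerProductSpace

theorem ContinuousLinearMap.norm_inner_apply_comp_le {𝕜 V H : Type*} [RCLike 𝕜]
    [SeminormedAddCommGroup V] [NormedSpace 𝕜 V]
    [NormedAddCommGroup H] [InnerProductSpace 𝕜 H]
    (Tr : V →L[𝕜] H) (A : H →L[𝕜] H) (u : V) (w : H) :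
    ‖⟪w, A (Tr u)⟫_𝕜‖ ≤ ‖A‖ * ‖Tr‖ * ‖u‖ * ‖w‖ :=
  calc ‖⟪w, A (Tr u)⟫_𝕜‖
      ≤ ‖w‖ * ‖A (Tr u)‖ := norm_inner_le_norm _ _
    _ ≤ ‖w‖ * (‖A‖ * (‖Tr‖ * ‖u‖)) := by
        gcongr
        exact A.le_opNorm_of_le (Tr.le_opNorm u)
    _ = ‖A‖ * ‖Tr‖ * ‖u‖ * ‖w‖ := by ring

theorem statement19_general
    (V Hb G : Type*)
    [NormedAddCommGroup V] [InnerProductSpace ℂ V]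
    [NormedAddCommGroup Hb] [InnerProductSpace ℂ Hb]
    [NormedAddCommGroup G] [InnerProductSpace ℂ G]
    (T : ℝ)
    (grad : V →L[ℂ] G) (Tr : V →L[ℂ] Hb)
    (α : ℝ) (B : ℝ → Hb →L[ℂ] Hb)
    (cB : ℝ) (hB : ∀ t ∈ Set.Icc 0 T, ∀ s ∈ Set.Icc 0 T, ‖B t - B s‖ ≤ cB * |t - s| ^ α)
    -- the H^{s+1/2}(Ω)-norm Ns (0 < s < 1/2) and the fractional trace estimate
    (Ns : V → ℝ) (hNs : ∀ v : V, 0 ≤ Ns v)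
    (cs : ℝ) (hTrs : ∀ v : V, ‖Tr v‖ ≤ cs * Ns v) :
    ∃ c' > 0, ∀ t ∈ Set.Icc 0 T, ∀ s ∈ Set.Icc 0 T, ∀ u v : V,
      ‖((inner ℂ (grad v) (grad u) : ℂ) + (inner ℂ (Tr v) (B t (Tr u)) : ℂ))
        - ((inner ℂ (grad v) (grad u) : ℂ) + (inner ℂ (Tr v) (B s (Tr u)) : ℂ))‖
        ≤ c' * |t - s| ^ α * ‖u‖ * Ns v := by
  refine ⟨max (cB * cs * ‖Tr‖) 1, by positivity, fun t ht s hs u v => ?_⟩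
  rw [add_sub_add_left_eq_sub, ← inner_sub_right, ← sub_apply]
  have hB_Tr : ‖B t - B s‖ * ‖Tr‖ * ‖u‖ ≤ cB * |t - s| ^ α * ‖Tr‖ * ‖u‖ := by
    gcongr
    exact hB t ht s hs
  have hweight : 0 ≤ |t - s| ^ α * ‖u‖ * Ns v := by
    have := hNs v
    positivity
  calc ‖⟪Tr v, (B t - B s) (Tr u)⟫_ℂ‖
      ≤ ‖B t - B s‖ * ‖Tr‖ * ‖u‖ * ‖Tr v‖ := Tr.norm_inner_apply_comp_le _ u _
    _ ≤ cB * |t - s| ^ α * ‖Tr‖ * ‖u‖ * (cs * Ns v) :=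
        mul_le_mul hB_Tr (hTrs v) (norm_nonneg _) ((by positivity : (0 : ℝ) ≤ _).trans hB_Tr)
    _ = cB * cs * ‖Tr‖ * (|t - s| ^ α * ‖u‖ * Ns v) := by ring
    _ ≤ max (cB * cs * ‖Tr‖) 1 * (|t - s| ^ α * ‖u‖ * Ns v) := by gcongr; exact le_max_left _ _
    _ = max (cB * cs * ‖Tr‖) 1 * |t - s| ^ α * ‖u‖ * Ns v := by ring

theorem statement19
    (V Hb G : Type*)
    [NormedAddCommGroup V] [InnerProductSpace ℂ V] [CompleteSpace V]
    [NormedAddCommGroup Hb] [InnerProductSpace ℂ Hb] [CompleteSpace Hb]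
    [NormedAddCommGroup G] [InnerProductSpace ℂ G] [CompleteSpace G]
    (T : ℝ) (hT : 0 < T)
    (grad : V →L[ℂ] G) (Tr : V →L[ℂ] Hb)
    (α : ℝ) (hα : 1/4 < α) (B : ℝ → Hb →L[ℂ] Hb)
    (cB : ℝ) (hB : ∀ t ∈ Set.Icc 0 T, ∀ s ∈ Set.Icc 0 T, ‖B t - B s‖ ≤ cB * |t - s| ^ α)
    -- the H^{s+1/2}(Ω)-norm Ns (0 < s < 1/2) and the fractional trace estimate
    (Ns : V → ℝ) (hNs : ∀ v : V, 0 ≤ Ns v)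
    (cs : ℝ) (hcs : 0 < cs) (hTrs : ∀ v : V, ‖Tr v‖ ≤ cs * Ns v) :
    ∃ c' > 0, ∀ t ∈ Set.Icc 0 T, ∀ s ∈ Set.Icc 0 T, ∀ u v : V,
      ‖((inner ℂ (grad v) (grad u) : ℂ) + (inner ℂ (Tr v) (B t (Tr u)) : ℂ))
        - ((inner ℂ (grad v) (grad u) : ℂ) + (inner ℂ (Tr v) (B s (Tr u)) : ℂ))‖
        ≤ c' * |t - s| ^ α * ‖u‖ * Ns v :=
  statement19_general V Hb G T grad Tr α B cB hB Ns hNs cs hTrs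
end
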